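/- arXiv:1102.2038 — 2 statements merged into one kernel-verified Lean document; each statement's English description precedes it below -/
import Mathlib

section
/- Let u, v be scalar-valued smooth functions on an open set Ω ⊂ {(t,s) ∈ ℝ² : s > 0} satisfying ∂_t Δ_z^m u − ∂_s Δ_z^m v = 0 and ∂_t Δ_z^m v + ∂_s Δ_z^m u = 0 on Ω (i.e. f = u + iv satisfies ∂_z̄ Δ_z^m f = 0). Let μ be odd and n ∈ ℕ, and set A = D_r(n+(μ−1)/2){Δ_z^m u} and B = D^r(n+(μ−1)/2){Δ_z^m v}, regarded as functions of (x₀,r) (replacing t by x₀ and s by r). Then A and B satisfy the Vekua-type system ∂_{x₀}A − ∂_r B = ((2n+μ−1)/r) B and ∂_{x₀}B + ∂_r A = 0 on the corresponding domain. -/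
/-!
Write `C = B / r`. Since `B = r C`, the first equation of the system for `(A, B)` with
coefficient `c` says `∂_{x₀} A = (c + 1) C + r ∂_r C`; applying `r⁻¹ ∂_r` and commuting the
partial derivatives yields the first equation for `(r⁻¹ ∂_r A, ∂_r C)` with coefficient `c + 2`,
while the second equation gives `∂_{x₀} C = -r⁻¹ ∂_r A`, whence the second one. The
Cauchy–Riemann equations for `(Δ_z^m u, Δ_z^m v)` are the system with `c = 0`, so
`k = n + (μ - 1)/2` applications of `(D_r, D^r)` give the coefficient `2k = 2n + μ - 1`.
-/

noncomputable section

/-- Partial derivative in the first variable (`x₀`, resp. `t`) of a function on `ℝ²`. -/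
def pt1 (g : ℝ × ℝ → ℝ) (p : ℝ × ℝ) : ℝ := fderiv ℝ g p (1, 0)

/-- Partial derivative in the second variable (`r`, resp. `s`) of a function on `ℝ²`. -/
def pr2 (g : ℝ × ℝ → ℝ) (p : ℝ × ℝ) : ℝ := fderiv ℝ g p (0, 1)

/-- The operator `D_r(m) = ((1/r) ∂_r)^m`. -/
def DrOp : ℕ → (ℝ × ℝ → ℝ) → (ℝ × ℝ → ℝ)
  | 0, f => f
  | m + 1, f => fun p => (1 / p.2) * pr2 (DrOp m f) p

/-- The operator `D^r(m)`, defined by `D^r(0){f} = f` and `D^r(m){f} = ∂_r (D^r(m-1){f} / r)`. -/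
def DRop : ℕ → (ℝ × ℝ → ℝ) → (ℝ × ℝ → ℝ)
  | 0, f => f
  | m + 1, f => fun p => pr2 (fun q => DRop m f q / q.2) p

/-- The two-dimensional Laplacian `Δ_z = ∂_{x₀}² + ∂_r²` on functions on `ℝ²`. -/
def lap2 (g : ℝ × ℝ → ℝ) : ℝ × ℝ → ℝ := fun p => pt1 (pt1 g) p + pr2 (pr2 g) p

open Filter Topology
open scoped ContDiff

section PartialDerivatives

variable {f g : ℝ × ℝ → ℝ} {p : ℝ × ℝ}

theorem pr2_congr (h : f =ᶠ[𝓝 p] g) : pr2 f p = pr2 g p := by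
  rw [pr2, pr2, h.fderiv_eq]

theorem pr2_neg : pr2 (fun q => -f q) p = -pr2 f p := by
  simp [pr2, fderiv_fun_neg]

theorem pr2_add (hf : DifferentiableAt ℝ f p) (hg : DifferentiableAt ℝ g p) :
    pr2 (fun q => f q + g q) p = pr2 f p + pr2 g p := by
  simp [pr2, fderiv_fun_add hf hg]

theorem pr2_const_mul (hf : DifferentiableAt ℝ f p) (c : ℝ) :
    pr2 (fun q => c * f q) p = c * pr2 f p := by
  simp [pr2, fderiv_const_mul hf]

theorem hasFDerivAt_comp_snd {φ : ℝ → ℝ} (hφ : DifferentiableAt ℝ φ p.2) :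
    HasFDerivAt (fun q : ℝ × ℝ => φ q.2) (deriv φ p.2 • ContinuousLinearMap.snd ℝ ℝ ℝ) p :=
  hφ.hasDerivAt.comp_hasFDerivAt p hasFDerivAt_snd

theorem pt1_comp_snd_mul {φ : ℝ → ℝ} (hφ : DifferentiableAt ℝ φ p.2)
    (hf : DifferentiableAt ℝ f p) :
    pt1 (fun q => φ q.2 * f q) p = φ p.2 * pt1 f p := by
  have hφ' := hasFDerivAt_comp_snd hφ
  simp [pt1, fderiv_fun_mul hφ'.differentiableAt hf, hφ'.fderiv]

theorem pr2_comp_snd_mul {φ : ℝ → ℝ} (hφ : DifferentiableAt ℝ φ p.2)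
    (hf : DifferentiableAt ℝ f p) :
    pr2 (fun q => φ q.2 * f q) p = deriv φ p.2 * f p + φ p.2 * pr2 f p := by
  have hφ' := hasFDerivAt_comp_snd hφ
  simp [pr2, fderiv_fun_mul hφ'.differentiableAt hf, hφ'.fderiv]
  ring

theorem pr2_snd_mul (hf : DifferentiableAt ℝ f p) :
    pr2 (fun q => q.2 * f q) p = f p + p.2 * pr2 f p := by
  simpa using pr2_comp_snd_mul (φ := id) differentiableAt_id hf

theorem pt1_pr2_comm (hf : ContDiffAt ℝ 2 f p) : pt1 (pr2 f) p = pr2 (pt1 f) p := by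
  have hdf : DifferentiableAt ℝ (fderiv ℝ f) p :=
    (hf.fderiv_right (m := 1) (by norm_num)).differentiableAt (by norm_num)
  have hsymm := hf.isSymmSndFDerivAt (by simp [minSmoothness_of_isRCLikeNormedField])
  unfold pt1 pr2
  rw [fderiv_clm_apply hdf (differentiableAt_const _),
    fderiv_clm_apply hdf (differentiableAt_const _)]
  simp [hsymm (1, 0) (0, 1)]

end PartialDerivatives

section Smoothness

variable {Ω : Set (ℝ × ℝ)} {f : ℝ × ℝ → ℝ} {p : ℝ × ℝ}

theorem differentiableAt_of_contDiffOn (hΩ : IsOpen Ω) (hf : ContDiffOn ℝ ∞ f Ω)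
    (hp : p ∈ Ω) : DifferentiableAt ℝ f p :=
  (hf.differentiableOn (by simp)).differentiableAt (hΩ.mem_nhds hp)

theorem contDiffAt_two_of_contDiffOn (hΩ : IsOpen Ω) (hf : ContDiffOn ℝ ∞ f Ω)
    (hp : p ∈ Ω) : ContDiffAt ℝ 2 f p :=
  (hf.contDiffAt (hΩ.mem_nhds hp)).of_le (WithTop.coe_le_coe.mpr le_top)

theorem contDiffOn_pt1 (hΩ : IsOpen Ω) (hf : ContDiffOn ℝ ∞ f Ω) :
    ContDiffOn ℝ ∞ (pt1 f) Ω :=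
  (hf.fderiv_of_isOpen hΩ le_rfl).clm_apply contDiffOn_const

theorem contDiffOn_pr2 (hΩ : IsOpen Ω) (hf : ContDiffOn ℝ ∞ f Ω) :
    ContDiffOn ℝ ∞ (pr2 f) Ω :=
  (hf.fderiv_of_isOpen hΩ le_rfl).clm_apply contDiffOn_const

theorem contDiffOn_lap2_iterate (hΩ : IsOpen Ω) (hf : ContDiffOn ℝ ∞ f Ω) (m : ℕ) :
    ContDiffOn ℝ ∞ (lap2^[m] f) Ω := by
  induction m with
  | zero => exact hf
  | succ m ih =>
    rw [Function.iterate_succ_apply']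
    exact (contDiffOn_pt1 hΩ (contDiffOn_pt1 hΩ ih)).add
      (contDiffOn_pr2 hΩ (contDiffOn_pr2 hΩ ih))

theorem contDiffOn_div_snd (hf : ContDiffOn ℝ ∞ f Ω) (hΩ₀ : ∀ p ∈ Ω, p.2 ≠ 0) :
    ContDiffOn ℝ ∞ (fun q => f q / q.2) Ω :=
  hf.div contDiff_snd.contDiffOn hΩ₀

theorem contDiffOn_DrOp (hΩ : IsOpen Ω) (hΩ₀ : ∀ p ∈ Ω, p.2 ≠ 0)
    (hf : ContDiffOn ℝ ∞ f Ω) (k : ℕ) : ContDiffOn ℝ ∞ (DrOp k f) Ω := by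
  induction k with
  | zero => exact hf
  | succ k ih =>
    simpa only [DrOp, one_div_mul_eq_div] using contDiffOn_div_snd (contDiffOn_pr2 hΩ ih) hΩ₀

theorem contDiffOn_DRop (hΩ : IsOpen Ω) (hΩ₀ : ∀ p ∈ Ω, p.2 ≠ 0)
    (hf : ContDiffOn ℝ ∞ f Ω) (k : ℕ) : ContDiffOn ℝ ∞ (DRop k f) Ω := by
  induction k with
  | zero => exact hf
  | succ k ih => exact contDiffOn_pr2 hΩ (contDiffOn_div_snd ih hΩ₀)

end Smoothness

def VekuaSystem (c : ℝ) (Ω : Set (ℝ × ℝ)) (A B : ℝ × ℝ → ℝ) : Prop :=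
  ∀ p ∈ Ω, pt1 A p - pr2 B p = c / p.2 * B p ∧ pt1 B p + pr2 A p = 0

namespace VekuaSystem

variable {c : ℝ} {Ω : Set (ℝ × ℝ)} {A B : ℝ × ℝ → ℝ} {p : ℝ × ℝ}

theorem first_eq_succ (hΩ : IsOpen Ω) (hΩ₀ : ∀ p ∈ Ω, p.2 ≠ 0)
    (hA : ContDiffOn ℝ ∞ A Ω) (hB : ContDiffOn ℝ ∞ B Ω) (h : VekuaSystem c Ω A B)
    (hp : p ∈ Ω) :
    pt1 (fun q => 1 / q.2 * pr2 A q) p - pr2 (pr2 fun q => B q / q.2) p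
      = (c + 2) / p.2 * pr2 (fun q => B q / q.2) p := by
  set C : ℝ × ℝ → ℝ := fun q => B q / q.2
  have hC : ContDiffOn ℝ ∞ C Ω := contDiffOn_div_snd hB hΩ₀
  have hAt : ∀ q ∈ Ω, pt1 A q = (c + 1) * C q + q.2 * pr2 C q := by
    intro q hq
    have hBC : B =ᶠ[𝓝 q] fun q' => q'.2 * C q' :=
      eventuallyEq_of_mem (hΩ.mem_nhds hq) fun q' hq' => by
        simp [C, mul_div_cancel₀ _ (hΩ₀ q' hq')]
    have hprB : pr2 B q = C q + q.2 * pr2 C q := by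
      rw [pr2_congr hBC, pr2_snd_mul (differentiableAt_of_contDiffOn hΩ hC hq)]
    have hBr : c / q.2 * B q = c * C q := by simp only [C]; ring
    linarith [(h q hq).1]
  have hpt1A : pr2 (pt1 A) p = (c + 2) * pr2 C p + p.2 * pr2 (pr2 C) p := by
    have hdC := differentiableAt_of_contDiffOn hΩ hC hp
    have hdprC := differentiableAt_of_contDiffOn hΩ (contDiffOn_pr2 hΩ hC) hp
    rw [pr2_congr (eventuallyEq_of_mem (hΩ.mem_nhds hp) hAt),
      pr2_add (hdC.const_mul _) (differentiableAt_snd.fun_mul hdprC), pr2_const_mul hdC,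
      pr2_snd_mul hdprC]
    ring
  have hpt1A' : pt1 (fun q => 1 / q.2 * pr2 A q) p = (p.2)⁻¹ * pr2 (pt1 A) p := by
    rw [pt1_comp_snd_mul (φ := fun r => 1 / r)
      ((differentiableAt_const 1).div differentiableAt_id (hΩ₀ p hp))
      (differentiableAt_of_contDiffOn hΩ (contDiffOn_pr2 hΩ hA) hp),
      pt1_pr2_comm (contDiffAt_two_of_contDiffOn hΩ hA hp)]
    simp
  rw [hpt1A', hpt1A]
  field_simp [hΩ₀ p hp]
  ring

theorem second_eq_succ (hΩ : IsOpen Ω) (hΩ₀ : ∀ p ∈ Ω, p.2 ≠ 0)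
    (hB : ContDiffOn ℝ ∞ B Ω) (h : VekuaSystem c Ω A B) (hp : p ∈ Ω) :
    pt1 (pr2 fun q => B q / q.2) p + pr2 (fun q => 1 / q.2 * pr2 A q) p = 0 := by
  have hC : ContDiffOn ℝ ∞ (fun q => B q / q.2) Ω := contDiffOn_div_snd hB hΩ₀
  have hpt1C : ∀ q ∈ Ω, pt1 (fun q => B q / q.2) q = -(1 / q.2 * pr2 A q) := by
    intro q hq
    have hCinv : (fun q : ℝ × ℝ => B q / q.2) = fun q => q.2⁻¹ * B q := by
      simp only [div_eq_inv_mul]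
    rw [hCinv, pt1_comp_snd_mul (φ := fun r => r⁻¹) (differentiableAt_inv (hΩ₀ q hq))
      (differentiableAt_of_contDiffOn hΩ hB hq)]
    linear_combination q.2⁻¹ * (h q hq).2
  rw [pt1_pr2_comm (contDiffAt_two_of_contDiffOn hΩ hC hp),
    pr2_congr (eventuallyEq_of_mem (hΩ.mem_nhds hp) hpt1C), pr2_neg]
  ring

theorem succ (hΩ : IsOpen Ω) (hΩ₀ : ∀ p ∈ Ω, p.2 ≠ 0)
    (hA : ContDiffOn ℝ ∞ A Ω) (hB : ContDiffOn ℝ ∞ B Ω) (h : VekuaSystem c Ω A B) :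
    VekuaSystem (c + 2) Ω (fun q => 1 / q.2 * pr2 A q) (pr2 fun q => B q / q.2) :=
  fun _ hp => ⟨first_eq_succ hΩ hΩ₀ hA hB h hp, second_eq_succ hΩ hΩ₀ hB h hp⟩

theorem DrOp_DRop (hΩ : IsOpen Ω) (hΩ₀ : ∀ p ∈ Ω, p.2 ≠ 0)
    (hA : ContDiffOn ℝ ∞ A Ω) (hB : ContDiffOn ℝ ∞ B Ω) (h : VekuaSystem 0 Ω A B) (k : ℕ) :
    VekuaSystem (2 * k) Ω (DrOp k A) (DRop k B) := by
  induction k with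
  | zero => simpa [DrOp, DRop] using h
  | succ k ih =>
    have := ih.succ hΩ hΩ₀ (contDiffOn_DrOp hΩ hΩ₀ hA k) (contDiffOn_DRop hΩ hΩ₀ hB k)
    rwa [show (2 * k + 2 : ℝ) = 2 * ↑(k + 1) by push_cast; ring] at this

end VekuaSystem

theorem vekua_system_of_polyholomorphic_general (μ : ℕ) (hμodd : Odd μ)
    (m n : ℕ) (u v : ℝ × ℝ → ℝ) (Ω : Set (ℝ × ℝ)) (hΩ : IsOpen Ω)
    (hΩpos : Ω ⊆ {p : ℝ × ℝ | 0 < p.2})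
    (hu : ContDiffOn ℝ (⊤ : ℕ∞) u Ω) (hv : ContDiffOn ℝ (⊤ : ℕ∞) v Ω)
    (hCR : ∀ p ∈ Ω, pt1 (lap2^[m] u) p - pr2 (lap2^[m] v) p = 0
      ∧ pt1 (lap2^[m] v) p + pr2 (lap2^[m] u) p = 0) :
    ∀ p ∈ Ω,
      pt1 (DrOp (n + (μ - 1) / 2) (lap2^[m] u)) p
          - pr2 (DRop (n + (μ - 1) / 2) (lap2^[m] v)) p
        = ((2 * (n : ℝ) + (μ : ℝ) - 1) / p.2) * DRop (n + (μ - 1) / 2) (lap2^[m] v) p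
      ∧ pt1 (DRop (n + (μ - 1) / 2) (lap2^[m] v)) p
          + pr2 (DrOp (n + (μ - 1) / 2) (lap2^[m] u)) p = 0 := by
  have hΩ₀ : ∀ p ∈ Ω, p.2 ≠ 0 := fun p hp => (hΩpos hp).ne'
  have hCR₀ : VekuaSystem 0 Ω (lap2^[m] u) (lap2^[m] v) := by
    simpa [VekuaSystem] using hCR
  have hvek := hCR₀.DrOp_DRop hΩ hΩ₀ (contDiffOn_lap2_iterate hΩ hu m)
    (contDiffOn_lap2_iterate hΩ hv m) (n + (μ - 1) / 2)
  obtain ⟨j, rfl⟩ := hμodd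
  have hc : (2 * ↑(n + (2 * j + 1 - 1) / 2) : ℝ) = 2 * n + ↑(2 * j + 1) - 1 := by
    rw [show (2 * j + 1 - 1) / 2 = j by omega]
    push_cast
    ring
  rwa [hc] at hvek

/-- The Vekua-type system satisfied by `A = D_r(n+(μ−1)/2){Δ_z^m u}` and
`B = D^r(n+(μ−1)/2){Δ_z^m v}` when `f = u + iv` satisfies `∂_z̄ Δ_z^m f = 0` and `μ` is odd:
`∂_{x₀}A − ∂_r B = ((2n+μ−1)/r) B` and `∂_{x₀}B + ∂_r A = 0`. -/
theorem vekua_system_of_polyholomorphic (μ : ℕ) (hμodd : Odd μ) (hμpos : 0 < μ)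
    (m n : ℕ) (u v : ℝ × ℝ → ℝ) (Ω : Set (ℝ × ℝ)) (hΩ : IsOpen Ω)
    (hΩpos : Ω ⊆ {p : ℝ × ℝ | 0 < p.2})
    (hu : ContDiffOn ℝ (⊤ : ℕ∞) u Ω) (hv : ContDiffOn ℝ (⊤ : ℕ∞) v Ω)
    (hCR : ∀ p ∈ Ω, pt1 (lap2^[m] u) p - pr2 (lap2^[m] v) p = 0
      ∧ pt1 (lap2^[m] v) p + pr2 (lap2^[m] u) p = 0) :
    ∀ p ∈ Ω,
      pt1 (DrOp (n + (μ - 1) / 2) (lap2^[m] u)) p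
          - pr2 (DRop (n + (μ - 1) / 2) (lap2^[m] v)) p
        = ((2 * (n : ℝ) + (μ : ℝ) - 1) / p.2) * DRop (n + (μ - 1) / 2) (lap2^[m] v) p
      ∧ pt1 (DRop (n + (μ - 1) / 2) (lap2^[m] v)) p
          + pr2 (DrOp (n + (μ - 1) / 2) (lap2^[m] u)) p = 0 :=
  vekua_system_of_polyholomorphic_general μ hμodd m n u v Ω hΩ hΩpos hu hv hCR
end
end

section
/- Let k, n ∈ ℕ with k ≤ n, and let P_{n−k} be a homogeneous Dunkl-monogenic polynomial of degree n−k on ℝ^d. Then the CK-extension of x̲^k P_{n−k}(x̲), namely CK[x̲^k P_{n−k}](x) = Σ_{j=0}^n ((−x₀)^j / j!) D̲^j( x̲^k P_{n−k}(x̲) ), has the form ( Σ_{j=0}^k c_j x₀^j x̲^{k−j} ) P_{n−k}(x̲) for some real constants c₀,…,c_k with c₀ = 1; equivalently it can be written as ( U(x₀,|x̲|) + (x̲/|x̲|) V(x₀,|x̲|) ) P_{n−k}(x̲), where U and V are real-valued homogeneous polynomials of degree k in the variables x₀ and r = |x̲|. -/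
/-! The Clifford vector `x̲` anticommutes with the Dunkl–Dirac operator up to lower-order terms:
`D̲(x̲ f) = -μ f - 2 E f - x̲ D̲ f` with `E` the Euler operator, the reflection terms supplying
the `2γ_κ` in `μ`. For `f = x̲^m P` with `P` monogenic and homogeneous, induction on `m` gives
`D̲(x̲^m P) = c_m x̲^{m-1} P` with real `c_m` and `c_0 = 0`. So `D̲^j(x̲^k P)` is a real multiple
of `x̲^{k-j} P` that vanishes for `j > k`, and the CK series collapses to
`Σ_{j ≤ k} c'_j x₀^j x̲^{k-j} P`. Writing `x̲ = r ω̲` with `ω̲² = -1` splits each power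
`x̲^{k-j}` into a scalar or an `ω̲` multiple, which produces `U` and `V`. -/

open scoped BigOperators RealInnerProductSpace

noncomputable section

/-- Euclidean space `ℝ^d`. -/
abbrev Vd (d : ℕ) := EuclideanSpace ℝ (Fin d)

/-- The reflection `σ_a x = x − 2(⟪a,x⟫/|a|²) a` in the hyperplane orthogonal to `a`. -/
def reflect {d : ℕ} (a x : Vd d) : Vd d := x - ((2 * ⟪a, x⟫) / ⟪a, a⟫) • a

/-- A finite root system `R` with a choice of positive subsystem `Rp` and a `W`-invariant
multiplicity function `kap`. -/
structure DunklData (d : ℕ) where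
  R : Finset (Vd d)
  Rp : Finset (Vd d)
  kap : Vd d → ℝ
  zero_not_mem : (0 : Vd d) ∉ R
  inter_line : ∀ a ∈ R, ∀ c : ℝ, c • a ∈ R → c = 1 ∨ c = -1
  reflect_mem : ∀ a ∈ R, ∀ b ∈ R, reflect a b ∈ R
  Rp_subset : Rp ⊆ R
  pos_split : ∀ a ∈ R, Xor' (a ∈ Rp) (-a ∈ Rp)
  kap_nonneg : ∀ a ∈ R, 0 ≤ kap a
  kap_invariant : ∀ a ∈ R, ∀ b ∈ R, kap (reflect a b) = kap b

/-- The index `γ_κ = Σ_{α ∈ R₊} κ(α)`. -/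
def gam {d : ℕ} (S : DunklData d) : ℝ := ∑ a ∈ S.Rp, S.kap a

/-- The Dunkl dimension `μ = 2γ_κ + d`. -/
def dunklDim {d : ℕ} (S : DunklData d) : ℝ := 2 * gam S + d

variable {d : ℕ} {A : Type*} [NormedRing A] [NormedAlgebra ℝ A]

/-- The Clifford algebra relations `e_i e_j + e_j e_i = −2δ_{ij}` for the generators of
`ℝ_{0,d}`, together with linear independence of the basis products `e_A`. -/
def CliffordRel (e : Fin d → A) : Prop :=
  (∀ i j, e i * e j + e j * e i = if i = j then (-2 : A) else 0) ∧
    LinearIndependent ℝ (fun s : Finset (Fin d) => ((s.sort (· ≤ ·)).map e).prod)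

/-- The Clifford vector `x̲ = Σ x_i e_i` associated to `x ∈ ℝ^d`. -/
def vecC (e : Fin d → A) (x : Vd d) : A := ∑ i, x i • e i

/-- The Dunkl difference quotient `(f(x) − f(σ_a x)) / ⟪a, x⟫`, extended by continuity
(for differentiable `f`) across the hyperplane `⟪a, x⟫ = 0`. -/
def dQuot (a : Vd d) (f : Vd d → A) (x : Vd d) : A :=
  if ⟪a, x⟫ = 0 then (2 / ⟪a, a⟫) • fderiv ℝ f x a
  else (⟪a, x⟫)⁻¹ • (f x - f (reflect a x))

/-- The Dunkl operator `T_{x_i}` on `ℝ^d`. -/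
def dunklT (S : DunklData d) (i : Fin d) (f : Vd d → A) (x : Vd d) : A :=
  fderiv ℝ f x (EuclideanSpace.single i 1) + ∑ a ∈ S.Rp, (S.kap a * a i) • dQuot a f x

/-- The Dunkl-Dirac operator `D̲ = Σ e_i T_{x_i}` on `ℝ^d`. -/
def diracD (e : Fin d → A) (S : DunklData d) (f : Vd d → A) (x : Vd d) : A :=
  ∑ i, e i * dunklT S i f x

/-- The Dunkl difference quotient on `ℝ^{d+1} = ℝ × ℝ^d` (the reflection group acts on the
`x̲`-part only, leaving the `x₀`-axis invariant). -/
def dQuot' (a : Vd d) (F : ℝ × Vd d → A) (x : ℝ × Vd d) : A :=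
  if ⟪a, x.2⟫ = 0 then (2 / ⟪a, a⟫) • fderiv ℝ F x (0, a)
  else (⟪a, x.2⟫)⁻¹ • (F x - F (x.1, reflect a x.2))

/-- The Dunkl operator `T_{x_i}`, `i = 1, …, d`, acting on functions on `ℝ^{d+1}`. -/
def dunklT' (S : DunklData d) (i : Fin d) (F : ℝ × Vd d → A) (x : ℝ × Vd d) : A :=
  fderiv ℝ F x (0, EuclideanSpace.single i 1) + ∑ a ∈ S.Rp, (S.kap a * a i) • dQuot' a F x

/-- The partial derivative `T_{x₀} = ∂_{x₀}` on `ℝ^{d+1}`. -/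
def pd0 (F : ℝ × Vd d → A) (x : ℝ × Vd d) : A := fderiv ℝ F x (1, 0)

/-- The Dunkl Laplacian `Δ = ∂_{x₀}² + Σ_{i=1}^d T_{x_i}²` on `ℝ^{d+1}`. -/
def dunklLap (S : DunklData d) (F : ℝ × Vd d → A) : ℝ × Vd d → A :=
  fun x => pd0 (pd0 F) x + ∑ i, dunklT' S i (dunklT' S i F) x

/-- The Dunkl–Cauchy–Riemann operator `D = ∂_{x₀} + D̲` on `ℝ^{d+1}`. -/
def dunklCR (e : Fin d → A) (S : DunklData d) (F : ℝ × Vd d → A) (x : ℝ × Vd d) : A :=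
  pd0 F x + ∑ i, e i * dunklT' S i F x

/-- The CK-extension of `x̲^k P_{n−k}(x̲)` (the series terminates after `n + 1` terms). -/
def ckVecPow (e : Fin d → A) (S : DunklData d) (k n : ℕ) (P : Vd d → A)
    (x : ℝ × Vd d) : A :=
  ∑ j ∈ Finset.range (n + 1),
    ((-x.1) ^ j / (j.factorial : ℝ)) • (diracD e S)^[j] (fun y => vecC e y ^ k * P y) x.2


section Clifford

variable (e : Fin d → A)

def CliffordAnticommRel : Prop :=
  ∀ i j, e i * e j + e j * e i = if i = j then (-2 : A) else 0

def vecCL : Vd d →L[ℝ] A :=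
  ∑ i, (EuclideanSpace.proj i : Vd d →L[ℝ] ℝ).smulRight (e i)

@[simp]
lemma coe_vecCL : ⇑(vecCL e) = vecC e := by
  ext x
  simp [vecCL, vecC]

lemma vecC_smul (c : ℝ) (x : Vd d) : vecC e (c • x) = c • vecC e x := by
  simp only [← coe_vecCL, map_smul]

lemma vecC_sub (x y : Vd d) : vecC e (x - y) = vecC e x - vecC e y := by
  simp only [← coe_vecCL, map_sub]

lemma vecC_single (i : Fin d) : vecC e (EuclideanSpace.single i 1) = e i := by
  simp [vecC, PiLp.single_apply]

lemma differentiable_vecC : Differentiable ℝ (vecC e) := by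
  simpa only [coe_vecCL] using (vecCL e).differentiable

lemma smul_neg_two (c : ℝ) : c • (-2 : A) = (-2 * c) • (1 : A) := by
  rw [mul_comm, ← smul_smul, ← Algebra.algebraMap_eq_smul_one, map_neg, map_ofNat]

variable {e}

lemma vecC_mul_vecC_add (he : CliffordAnticommRel e) (a b : Vd d) :
    vecC e a * vecC e b + vecC e b * vecC e a = (-2 * ⟪a, b⟫) • (1 : A) := by
  have expand : ∀ u v : Vd d,
      vecC e u * vecC e v = ∑ i, ∑ j, (u i * v j) • (e i * e j) := fun u v => by
    simp only [vecC, Finset.sum_mul_sum, smul_mul_smul_comm]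
  have diag : ∀ i, ∑ j, ((a i * b j) • (e i * e j) + (b j * a i) • (e j * e i))
      = (-2 * (a i * b i)) • (1 : A) := fun i => by
    simp only [mul_comm (b _), ← smul_add, he i, smul_ite, smul_zero, Finset.sum_ite_eq,
      Finset.mem_univ, if_true, smul_neg_two]
  rw [expand, expand, Finset.sum_comm (f := fun i j => (b i * a j) • (e i * e j)),
    ← Finset.sum_add_distrib]
  simp only [← Finset.sum_add_distrib, diag, ← Finset.sum_smul, ← Finset.mul_sum]
  congr 2
  simp [PiLp.inner_apply, mul_comm]

lemma vecC_mul_vecC_mul (he : CliffordAnticommRel e) (a b : Vd d) (u : A) :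
    vecC e a * (vecC e b * u) = (-2 * ⟪a, b⟫) • u - vecC e b * (vecC e a * u) := by
  rw [← mul_assoc, ← mul_assoc, eq_sub_iff_add_eq, ← add_mul, vecC_mul_vecC_add he,
    smul_one_mul]

lemma vecC_mul_self_mul (he : CliffordAnticommRel e) (a : Vd d) (u : A) :
    vecC e a * (vecC e a * u) = (-⟪a, a⟫) • u := by
  linear_combination (norm := module) (1 / 2 : ℝ) • vecC_mul_vecC_mul he a a u

lemma e_mul_vecC_mul (he : CliffordAnticommRel e) (i : Fin d) (b : Vd d) (u : A) :
    e i * (vecC e b * u) = (-2 * b i) • u - vecC e b * (e i * u) := by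
  simpa [← vecC_single e, EuclideanSpace.inner_single_left] using
    vecC_mul_vecC_mul he (EuclideanSpace.single i 1) b u

lemma e_mul_e_mul (he : CliffordAnticommRel e) (i : Fin d) (u : A) : e i * (e i * u) = -u := by
  simpa [← vecC_single e, EuclideanSpace.inner_single_left] using
    vecC_mul_self_mul he (EuclideanSpace.single i 1) u

lemma vecC_pow_eq (he : CliffordAnticommRel e) {x : Vd d} (hx : x ≠ 0) (m : ℕ) :
    vecC e x ^ m = ((-1) ^ (m / 2) * ‖x‖ ^ m) • (‖x‖⁻¹ • vecC e x) ^ (m % 2) := by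
  set ω := ‖x‖⁻¹ • vecC e x
  have hr : ‖x‖ ≠ 0 := norm_ne_zero_iff.mpr hx
  have hω : ω * ω = (-1 : ℝ) • (1 : A) := by
    rw [smul_mul_smul_comm, ← mul_one (vecC e x * vecC e x), mul_assoc, vecC_mul_self_mul he,
      real_inner_self_eq_norm_sq, smul_smul]
    field_simp
  have hxω : vecC e x = ‖x‖ • ω := by simp only [ω, smul_smul, mul_inv_cancel₀ hr, one_smul]
  calc vecC e x ^ m = ‖x‖ ^ m • ω ^ (2 * (m / 2) + m % 2) := by rw [hxω, smul_pow, Nat.div_add_mod]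
    _ = ‖x‖ ^ m • ((ω * ω) ^ (m / 2) * ω ^ (m % 2)) := by rw [pow_add, pow_mul, sq]
    _ = _ := by rw [hω, smul_pow, one_pow, smul_mul_assoc, one_mul, smul_smul, mul_comm]

end Clifford

def binaryForm (a : ℕ → ℝ) (k : ℕ) (p : ℝ × ℝ) : ℝ :=
  ∑ j ∈ Finset.range (k + 1), a j * p.1 ^ j * p.2 ^ (k - j)

lemma contDiff_binaryForm (a : ℕ → ℝ) (k : ℕ) {n : WithTop ℕ∞} :
    ContDiff ℝ n (binaryForm a k) :=
  ContDiff.sum fun j _ => (contDiff_const.mul (contDiff_fst.pow j)).mul (contDiff_snd.pow _)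

lemma binaryForm_smul (a : ℕ → ℝ) (k : ℕ) (c : ℝ) (p : ℝ × ℝ) :
    binaryForm a k (c • p) = c ^ k * binaryForm a k p := by
  rw [binaryForm, binaryForm, Finset.mul_sum]
  refine Finset.sum_congr rfl fun j hj => ?_
  have hjk : k = j + (k - j) := by have := Finset.mem_range.mp hj; omega
  simp only [Prod.smul_fst, Prod.smul_snd, smul_eq_mul, mul_pow]
  rw [hjk, pow_add, ← hjk]
  ring

lemma exists_binaryForm_sum_vecC_pow {e : Fin d → A} (he : CliffordAnticommRel e) (a : ℕ → ℝ)
    (k : ℕ) :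
    ∃ U V : ℝ × ℝ → ℝ, ContDiff ℝ (⊤ : ℕ∞) U ∧ ContDiff ℝ (⊤ : ℕ∞) V
      ∧ (∀ (c : ℝ) (p : ℝ × ℝ), U (c • p) = c ^ k * U p)
      ∧ (∀ (c : ℝ) (p : ℝ × ℝ), V (c • p) = c ^ k * V p)
      ∧ ∀ (t : ℝ) (x : Vd d), x ≠ 0 → ∀ u : A,
          ∑ j ∈ Finset.range (k + 1), (a j * t ^ j) • (vecC e x ^ (k - j) * u)
            = U (t, ‖x‖) • u + V (t, ‖x‖) • ((‖x‖⁻¹ • vecC e x) * u) := by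
  let part (r : ℕ) (j : ℕ) : ℝ := if (k - j) % 2 = r then a j * (-1) ^ ((k - j) / 2) else 0
  refine ⟨binaryForm (part 0) k, binaryForm (part 1) k, contDiff_binaryForm _ _,
    contDiff_binaryForm _ _, binaryForm_smul _ _, binaryForm_smul _ _, fun t x hx u => ?_⟩
  simp only [binaryForm, Finset.sum_smul, ← Finset.sum_add_distrib]
  refine Finset.sum_congr rfl fun j _ => ?_
  rw [vecC_pow_eq he hx]
  rcases Nat.mod_two_eq_zero_or_one (k - j) with h | h <;>
    simp only [part, h, pow_zero, pow_one, if_true, zero_ne_one, one_ne_zero, if_false,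
      zero_mul, zero_smul, add_zero, zero_add, smul_mul_assoc, one_mul, smul_smul] <;>
    ring_nf

theorem fderiv_apply_self_of_homogeneous {E F : Type*} [NormedAddCommGroup E] [NormedSpace ℝ E]
    [NormedAddCommGroup F] [NormedSpace ℝ F] {f : E → F} {x : E} (hf : DifferentiableAt ℝ f x)
    {N : ℕ} (hhom : ∀ c : ℝ, f (c • x) = c ^ N • f x) :
    fderiv ℝ f x x = (N : ℝ) • f x := by
  have hray : HasDerivAt (fun c : ℝ => c • x) x 1 := by
    simpa using (hasDerivAt_id (1 : ℝ)).smul_const x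
  have hchain : HasDerivAt (fun c : ℝ => f (c • x)) (fderiv ℝ f x x) 1 := by
    have hf1 : HasFDerivAt f (fderiv ℝ f x) ((1 : ℝ) • x) := by
      rw [one_smul]
      exact hf.hasFDerivAt
    exact hf1.comp_hasDerivAt 1 hray
  have hpow : HasDerivAt (fun c : ℝ => f (c • x)) ((N : ℝ) • f x) 1 := by
    simpa [hhom] using (hasDerivAt_pow N (1 : ℝ)).smul_const (f x)
  exact hchain.unique hpow

lemma sum_smul_apply_single {F : Type*} [NormedAddCommGroup F] [NormedSpace ℝ F]
    (L : Vd d →L[ℝ] F) (x : Vd d) : ∑ i, x i • L (EuclideanSpace.single i 1) = L x := by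
  conv_rhs => rw [← (EuclideanSpace.basisFun (Fin d) ℝ).sum_repr x]
  simp [map_sum, map_smul]

lemma fderiv_vecC_mul (e : Fin d → A) {h : Vd d → A} {x : Vd d} (hh : DifferentiableAt ℝ h x)
    (v : Vd d) :
    fderiv ℝ (fun y => vecC e y * h y) x v = vecC e x * fderiv ℝ h x v + vecC e v * h x := by
  rw [← coe_vecCL, fderiv_fun_mul' (vecCL e).differentiableAt hh, ContinuousLinearMap.fderiv]
  simp

lemma DunklData.ne_zero_of_mem_Rp (S : DunklData d) {a : Vd d} (ha : a ∈ S.Rp) : a ≠ 0 :=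
  fun h => S.zero_not_mem (h ▸ S.Rp_subset ha)

section DunklDirac

variable {e : Fin d → A} (S : DunklData d)

lemma diracD_eq_add (F : Vd d → A) (x : Vd d) :
    diracD e S F x = (∑ i, e i * fderiv ℝ F x (EuclideanSpace.single i 1))
      + ∑ a ∈ S.Rp, S.kap a • (vecC e a * dQuot a F x) := by
  simp only [diracD, dunklT, mul_add, Finset.mul_sum, Finset.sum_add_distrib, vecC,
    Finset.sum_mul, Finset.smul_sum, mul_smul_comm, smul_mul_assoc, smul_smul]
  rw [Finset.sum_comm]

lemma dQuot_const_smul (a : Vd d) (c : ℝ) (F : Vd d → A) (x : Vd d) :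
    dQuot a (fun y => c • F y) x = c • dQuot a F x := by
  rw [dQuot, dQuot]
  split_ifs
  · rw [show (fun y => c • F y) = c • F from rfl, fderiv_const_smul_field,
      Pi.smul_apply, smul_apply, smul_comm]
  · rw [← smul_sub, smul_comm]

lemma diracD_const_smul (c : ℝ) (F : Vd d → A) (x : Vd d) :
    diracD e S (fun y => c • F y) x = c • diracD e S F x := by
  simp only [diracD_eq_add, dQuot_const_smul, smul_add, Finset.smul_sum, mul_smul_comm,
    smul_comm c]
  rw [show (fun y => c • F y) = c • F from rfl, fderiv_const_smul_field]
  simp only [Pi.smul_apply, smul_apply, mul_smul_comm]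

/-- Since `σ_a x̲ = x̲ - (2⟪a,x⟫/|a|²) a̲` and `a̲ x̲ = -x̲ a̲ - 2⟪a,x⟫`, the factor `⟪a,x⟫`
cancels against the denominator of the difference quotient. -/
lemma vecC_mul_dQuot_vecC_mul (he : CliffordAnticommRel e) {a : Vd d} (ha : a ≠ 0)
    {h : Vd d → A} {x : Vd d} (hh : DifferentiableAt ℝ h x) :
    vecC e a * dQuot a (fun y => vecC e y * h y) x
      = -(vecC e x * (vecC e a * dQuot a h x)) - (2 : ℝ) • h x := by
  have haa : ⟪a, a⟫ ≠ 0 := inner_self_ne_zero.mpr ha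
  rw [dQuot, dQuot]
  split_ifs with hax
  · simp only [fderiv_vecC_mul e hh, mul_smul_comm, mul_add, vecC_mul_vecC_mul he a x,
      vecC_mul_self_mul he a, hax]
    match_scalars <;> field_simp
    ring
  · simp only [reflect, vecC_sub, vecC_smul, mul_sub, sub_mul, mul_smul_comm,
      smul_mul_assoc, vecC_mul_vecC_mul he a x, vecC_mul_self_mul he a, smul_sub, smul_smul]
    match_scalars <;> field_simp
    ring

lemma sum_e_mul_fderiv_vecC_mul (he : CliffordAnticommRel e) {h : Vd d → A} {x : Vd d}
    (hh : DifferentiableAt ℝ h x) :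
    ∑ i, e i * fderiv ℝ (fun y => vecC e y * h y) x (EuclideanSpace.single i 1)
      = -((d : ℝ) • h x) - (2 : ℝ) • fderiv ℝ h x x
        - vecC e x * ∑ i, e i * fderiv ℝ h x (EuclideanSpace.single i 1) := by
  have hterm : ∀ i, e i * fderiv ℝ (fun y => vecC e y * h y) x (EuclideanSpace.single i 1)
      = -h x - (2 : ℝ) • (x i • fderiv ℝ h x (EuclideanSpace.single i 1))
        - vecC e x * (e i * fderiv ℝ h x (EuclideanSpace.single i 1)) := fun i => by
    rw [fderiv_vecC_mul e hh, mul_add, vecC_single, e_mul_vecC_mul he, e_mul_e_mul he, smul_smul]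
    module
  simp only [hterm, Finset.sum_sub_distrib, ← Finset.smul_sum, ← Finset.mul_sum,
    sum_smul_apply_single (fderiv ℝ h x), Finset.sum_neg_distrib, Finset.sum_const,
    Finset.card_univ, Fintype.card_fin, ← Nat.cast_smul_eq_nsmul ℝ]

lemma diracD_vecC_mul (he : CliffordAnticommRel e) {h : Vd d → A} {x : Vd d}
    (hh : DifferentiableAt ℝ h x) :
    diracD e S (fun y => vecC e y * h y) x
      = -(dunklDim S • h x) - (2 : ℝ) • fderiv ℝ h x x - vecC e x * diracD e S h x := by
  have hroots : ∑ a ∈ S.Rp, S.kap a • (vecC e a * dQuot a (fun y => vecC e y * h y) x)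
      = -(vecC e x * ∑ a ∈ S.Rp, S.kap a • (vecC e a * dQuot a h x)) - (gam S * 2) • h x := by
    rw [Finset.sum_congr rfl fun a ha => by
      rw [vecC_mul_dQuot_vecC_mul he (S.ne_zero_of_mem_Rp ha) hh]]
    simp only [smul_sub, smul_neg, Finset.sum_sub_distrib, Finset.sum_neg_distrib,
      Finset.mul_sum, mul_smul_comm, gam, ← Finset.sum_mul, ← Finset.sum_smul, smul_smul]
  rw [diracD_eq_add, diracD_eq_add, sum_e_mul_fderiv_vecC_mul he hh, hroots, dunklDim, mul_add]
  module

end DunklDirac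

section Monomials

variable {e : Fin d → A} {P : Vd d → A} {N : ℕ}

def vecPowMul (e : Fin d → A) (P : Vd d → A) (m : ℕ) : Vd d → A := fun y => vecC e y ^ m * P y

lemma vecPowMul_zero : vecPowMul e P 0 = P :=
  funext fun y => by simp [vecPowMul]

lemma vecPowMul_succ (m : ℕ) :
    vecPowMul e P (m + 1) = fun y => vecC e y * vecPowMul e P m y :=
  funext fun y => by simp [vecPowMul, pow_succ', mul_assoc]

lemma differentiable_vecPowMul (hP : Differentiable ℝ P) (m : ℕ) :
    Differentiable ℝ (vecPowMul e P m) :=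
  ((differentiable_vecC e).pow m).mul hP

lemma vecPowMul_smul (hhom : ∀ (c : ℝ) (y : Vd d), P (c • y) = c ^ N • P y) (m : ℕ) (c : ℝ)
    (y : Vd d) : vecPowMul e P m (c • y) = c ^ (m + N) • vecPowMul e P m y := by
  simp only [vecPowMul, vecC_smul, smul_pow, hhom, pow_add, smul_mul_smul_comm]

/-- In closed form `c_{2q} = -2q` and `c_{2q+1} = -(μ + 2N + 2q)`. -/
def diracCoeff (μ : ℝ) (N : ℕ) : ℕ → ℝ
  | 0 => 0
  | m + 1 => -(μ + 2 * (m + N)) - diracCoeff μ N m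

variable (S : DunklData d)

lemma diracD_vecPowMul (he : CliffordAnticommRel e) (hP : Differentiable ℝ P)
    (hhom : ∀ (c : ℝ) (y : Vd d), P (c • y) = c ^ N • P y) (hmono : ∀ x, diracD e S P x = 0)
    (m : ℕ) (x : Vd d) :
    diracD e S (vecPowMul e P m) x = diracCoeff (dunklDim S) N m • vecPowMul e P (m - 1) x := by
  induction m generalizing x with
  | zero => simp [vecPowMul_zero, hmono, diracCoeff]
  | succ m ih =>
    have hshift : vecC e x * (diracCoeff (dunklDim S) N m • vecPowMul e P (m - 1) x)
        = diracCoeff (dunklDim S) N m • vecPowMul e P m x := by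
      cases m with
      | zero => simp [diracCoeff]
      | succ m => simp [vecPowMul_succ]
    rw [vecPowMul_succ, diracD_vecC_mul S he (differentiable_vecPowMul hP m x),
      fderiv_apply_self_of_homogeneous (differentiable_vecPowMul hP m x)
        (fun c => vecPowMul_smul hhom m c x), ih, hshift, diracCoeff, Nat.add_sub_cancel]
    push_cast
    module

/-- Valid for every `j`: for `j > k` the product contains the factor `c_0 = 0`, so the truncated
`k - j` does no harm. -/
lemma iterate_diracD_vecPowMul (he : CliffordAnticommRel e) (hP : Differentiable ℝ P)
    (hhom : ∀ (c : ℝ) (y : Vd d), P (c • y) = c ^ N • P y) (hmono : ∀ x, diracD e S P x = 0)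
    (k j : ℕ) :
    (diracD e S)^[j] (vecPowMul e P k)
      = fun x =>
        (∏ i ∈ Finset.range j, diracCoeff (dunklDim S) N (k - i)) • vecPowMul e P (k - j) x := by
  induction j with
  | zero => simp
  | succ j ih =>
    funext x
    rw [Function.iterate_succ_apply', ih, diracD_const_smul,
      diracD_vecPowMul S he hP hhom hmono, smul_smul, Finset.prod_range_succ, Nat.sub_sub]

end Monomials

def ckCoeff (μ : ℝ) (N k j : ℕ) : ℝ :=
  (-1) ^ j * (∏ i ∈ Finset.range j, diracCoeff μ N (k - i)) / j.factorial

lemma ckCoeff_zero (μ : ℝ) (N k : ℕ) : ckCoeff μ N k 0 = 1 := by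
  simp [ckCoeff]

lemma ckCoeff_eq_zero_of_lt (μ : ℝ) (N : ℕ) {k j : ℕ} (hkj : k < j) : ckCoeff μ N k j = 0 := by
  rw [ckCoeff, Finset.prod_eq_zero (Finset.mem_range.mpr hkj) (by simp [diracCoeff]),
    mul_zero, zero_div]

lemma ckVecPow_eq_sum {e : Fin d → A} (he : CliffordAnticommRel e) (S : DunklData d)
    {P : Vd d → A} {N : ℕ} (hP : Differentiable ℝ P)
    (hhom : ∀ (c : ℝ) (y : Vd d), P (c • y) = c ^ N • P y) (hmono : ∀ x, diracD e S P x = 0)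
    {k n : ℕ} (hkn : k ≤ n) (x : ℝ × Vd d) :
    ckVecPow e S k n P x = ∑ j ∈ Finset.range (k + 1),
      (ckCoeff (dunklDim S) N k j * x.1 ^ j) • (vecC e x.2 ^ (k - j) * P x.2) := by
  have hterm : ∀ j, ((-x.1) ^ j / (j.factorial : ℝ)) • (diracD e S)^[j] (vecPowMul e P k) x.2
      = (ckCoeff (dunklDim S) N k j * x.1 ^ j) • (vecC e x.2 ^ (k - j) * P x.2) := fun j => by
    rw [iterate_diracD_vecPowMul S he hP hhom hmono, smul_smul, ckCoeff, neg_pow]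
    congr 1
    ring
  rw [ckVecPow, show (fun y => vecC e y ^ k * P y) = vecPowMul e P k from rfl,
    ← Finset.sum_subset (Finset.range_subset_range.mpr (by omega : k + 1 ≤ n + 1))]
  · exact Finset.sum_congr rfl fun j _ => hterm j
  · intro j _ hj
    rw [hterm, ckCoeff_eq_zero_of_lt _ _ (by simpa using hj), zero_mul, zero_smul]

theorem ck_extension_vec_pow_monogenic_general (d : ℕ) (A : Type*) [NormedRing A] [NormedAlgebra ℝ A]
    (e : Fin d → A) (he : CliffordRel e) (S : DunklData d)
    (k n : ℕ) (hkn : k ≤ n) (P : Vd d → A) (hP : ContDiff ℝ (⊤ : ℕ∞) P)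
    (hhom : ∀ (c : ℝ) (x : Vd d), P (c • x) = (c ^ (n - k)) • P x)
    (hmono : ∀ x : Vd d, diracD e S P x = 0) :
    (∃ c : Fin (k + 1) → ℝ, c 0 = 1 ∧
      ∀ x : ℝ × Vd d,
        ckVecPow e S k n P x
          = ∑ j : Fin (k + 1),
              (c j * x.1 ^ (j : ℕ)) • (vecC e x.2 ^ (k - (j : ℕ)) * P x.2)) ∧
    (∃ U V : ℝ × ℝ → ℝ, ContDiff ℝ (⊤ : ℕ∞) U ∧ ContDiff ℝ (⊤ : ℕ∞) V
      ∧ (∀ (c : ℝ) (p : ℝ × ℝ), U (c • p) = c ^ k * U p)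
      ∧ (∀ (c : ℝ) (p : ℝ × ℝ), V (c • p) = c ^ k * V p)
      ∧ ∀ x : ℝ × Vd d, x.2 ≠ 0 →
          ckVecPow e S k n P x
            = U (x.1, ‖x.2‖) • P x.2
              + V (x.1, ‖x.2‖) • ((‖x.2‖⁻¹ • vecC e x.2) * P x.2)) := by
  set c := ckCoeff (dunklDim S) (n - k) k
  have hsum : ∀ x, ckVecPow e S k n P x
      = ∑ j ∈ Finset.range (k + 1), (c j * x.1 ^ j) • (vecC e x.2 ^ (k - j) * P x.2) :=
    ckVecPow_eq_sum he.1 S (hP.differentiable (by simp)) hhom hmono hkn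
  obtain ⟨U, V, hU, hV, hUhom, hVhom, hUV⟩ := exists_binaryForm_sum_vecC_pow he.1 c k
  refine ⟨⟨fun j => c j, ckCoeff_zero _ _ _, fun x => ?_⟩,
    U, V, hU, hV, hUhom, hVhom, fun x hx => ?_⟩
  · rw [hsum,
      Fin.sum_univ_eq_sum_range (fun j => (c j * x.1 ^ j) • (vecC e x.2 ^ (k - j) * P x.2))]
  · rw [hsum, hUV x.1 x.2 hx]

/-- The CK-extension of `x̲^k P_{n−k}(x̲)` has the form `(Σ_{j=0}^k c_j x₀^j x̲^{k−j}) P_{n−k}(x̲)`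
with `c₀ = 1`; equivalently it equals `(U(x₀,|x̲|) + ω̲ V(x₀,|x̲|)) P_{n−k}(x̲)` with `U`, `V`
real-valued homogeneous polynomials of degree `k` in `(x₀, r)`. -/
theorem ck_extension_vec_pow_monogenic (d : ℕ) (A : Type*) [NormedRing A] [NormedAlgebra ℝ A]
    (e : Fin d → A) (he : CliffordRel e) (S : DunklData d) (hγ : 0 < gam S)
    (k n : ℕ) (hkn : k ≤ n) (P : Vd d → A) (hP : ContDiff ℝ (⊤ : ℕ∞) P)
    (hhom : ∀ (c : ℝ) (x : Vd d), P (c • x) = (c ^ (n - k)) • P x)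
    (hmono : ∀ x : Vd d, diracD e S P x = 0) :
    (∃ c : Fin (k + 1) → ℝ, c 0 = 1 ∧
      ∀ x : ℝ × Vd d,
        ckVecPow e S k n P x
          = ∑ j : Fin (k + 1),
              (c j * x.1 ^ (j : ℕ)) • (vecC e x.2 ^ (k - (j : ℕ)) * P x.2)) ∧
    (∃ U V : ℝ × ℝ → ℝ, ContDiff ℝ (⊤ : ℕ∞) U ∧ ContDiff ℝ (⊤ : ℕ∞) V
      ∧ (∀ (c : ℝ) (p : ℝ × ℝ), U (c • p) = c ^ k * U p)
      ∧ (∀ (c : ℝ) (p : ℝ × ℝ), V (c • p) = c ^ k * V p)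
      ∧ ∀ x : ℝ × Vd d, x.2 ≠ 0 →
          ckVecPow e S k n P x
            = U (x.1, ‖x.2‖) • P x.2
              + V (x.1, ‖x.2‖) • ((‖x.2‖⁻¹ • vecC e x.2) * P x.2)) :=
  ck_extension_vec_pow_monogenic_general d A e he S k n hkn P hP hhom hmono
end
end
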